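/- Let Λ be a finite-dimensional algebra over a field K, M a right Λ-module with Hom_Λ(M,Λ) = 0, E := End_Λ(M), and △ := △(DM) the upper triangular matrix ring of the Λ-E-bimodule DM = Hom_K(M,K). Then the K-dual D△ is isomorphic, as a △-△-bimodule, to the 'matrix' bimodule (DΛ 0; M DE), where the left and right △-actions use the bimodule maps DM ⊗_E M → DΛ, f⊗m ↦ (a ↦ f(ma)), and M ⊗_Λ DM → DE, m⊗f ↦ (θ ↦ f(θ(m))). -/

import Mathlib

open MulOpposite

variable {K : Type*} [Field K] {Λ : Type*} [Ring Λ] [Algebra K Λ] [FiniteDimensional K Λ]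
  {M : Type*} [AddCommGroup M] [Module Λᵐᵒᵖ M] [Module K M]
  [SMulCommClass Λᵐᵒᵖ K M] [IsScalarTower K Λᵐᵒᵖ M] [FiniteDimensional K M]

/-- Any right `Λ`-module endomorphism of `M` is `K`-linear. -/
def eToK (b : Module.End Λᵐᵒᵖ M) : M →ₗ[K] M where
  toFun := b
  map_add' := b.map_add
  map_smul' c m := by
    show b (c • m) = c • b m
    have h : c • m = (c • (1 : Λᵐᵒᵖ)) • m := by rw [smul_assoc, one_smul]
    rw [h, b.map_smul, smul_assoc, one_smul]

/-- The `K`-linear map `M → M`, `m ↦ m·a`. -/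
def opSmulK (a : Λ) : M →ₗ[K] M where
  toFun m := op a • m
  map_add' m m' := smul_add _ m m'
  map_smul' c m := by show op a • c • m = c • (op a • m); rw [smul_comm]

/-- Multiplication of the upper triangular matrix ring `△(DM) = (Λ DM; 0 E)`:
`(a,f,b)(a',f',b') = (aa', a·f' + f·b', bb')`, where `(a·f')(m) = f'(m·a)` and
`(f·b')(m) = f(b'(m))`. -/
noncomputable def dTriMul (p q : Λ × (M →ₗ[K] K) × Module.End Λᵐᵒᵖ M) :
    Λ × (M →ₗ[K] K) × Module.End Λᵐᵒᵖ M :=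
  (p.1 * q.1, q.2.1.comp (opSmulK p.1) + p.2.1.comp (eToK q.2.2), p.2.2 * q.2.2)

/-- The pairing `DM ⊗_E M → DΛ`, `f ⊗ m ↦ (a ↦ f(ma))`. -/
noncomputable def dpair (f : M →ₗ[K] K) (m : M) : Λ →ₗ[K] K :=
  { toFun := fun a => f (op a • m)
    map_add' := fun a b => by
      show f (op (a + b) • m) = f (op a • m) + f (op b • m)
      rw [op_add, add_smul, map_add]
    map_smul' := fun c a => by
      show f (op (c • a) • m) = c • f (op a • m)
      rw [MulOpposite.op_smul, smul_assoc, map_smul] }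

/-- The pairing `M ⊗_Λ DM → DE`, `m ⊗ f ↦ (θ ↦ f(θ(m)))`. -/
noncomputable def epair (m : M) (f : M →ₗ[K] K) : Module.End Λᵐᵒᵖ M →ₗ[K] K where
  toFun θ := f (θ m)
  map_add' θ η := by simp
  map_smul' c θ := by simp

/-- Right multiplication in `E = End_Λ(M)` as a `K`-linear map. -/
noncomputable def mulRightE (b : Module.End Λᵐᵒᵖ M) :
    Module.End Λᵐᵒᵖ M →ₗ[K] Module.End Λᵐᵒᵖ M where
  toFun θ := θ * b
  map_add' θ η := add_mul θ η b
  map_smul' c θ := by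
    refine LinearMap.ext fun m => ?_
    show ((c • θ) * b) m = (c • (θ * b)) m
    simp

/-- Left multiplication in `E = End_Λ(M)` as a `K`-linear map. -/
noncomputable def mulLeftE (b : Module.End Λᵐᵒᵖ M) :
    Module.End Λᵐᵒᵖ M →ₗ[K] Module.End Λᵐᵒᵖ M where
  toFun θ := b * θ
  map_add' θ η := mul_add b θ η
  map_smul' c θ := by
    refine LinearMap.ext fun m => ?_
    show (b * (c • θ)) m = (c • (b * θ)) m
    show b ((c • θ) m) = c • b (θ m)
    rw [LinearMap.smul_apply]
    exact (eToK b).map_smul c (θ m)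

/-- The left action of `△(DM)` on the bimodule `(DΛ 0; M DE)`. -/
noncomputable def dTriLact (t : Λ × (M →ₗ[K] K) × Module.End Λᵐᵒᵖ M)
    (w : (Λ →ₗ[K] K) × M × (Module.End Λᵐᵒᵖ M →ₗ[K] K)) :
    (Λ →ₗ[K] K) × M × (Module.End Λᵐᵒᵖ M →ₗ[K] K) :=
  (w.1.comp (LinearMap.mulRight K t.1) + dpair t.2.1 w.2.1,
   t.2.2 w.2.1,
   w.2.2.comp (mulRightE t.2.2))

/-- The right action of `△(DM)` on the bimodule `(DΛ 0; M DE)`. -/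
noncomputable def dTriRact (w : (Λ →ₗ[K] K) × M × (Module.End Λᵐᵒᵖ M →ₗ[K] K))
    (t : Λ × (M →ₗ[K] K) × Module.End Λᵐᵒᵖ M) :
    (Λ →ₗ[K] K) × M × (Module.End Λᵐᵒᵖ M →ₗ[K] K) :=
  (w.1.comp (LinearMap.mulLeft K t.1),
   op t.1 • w.2.1,
   epair w.2.1 t.2.1 + w.2.2.comp (mulLeftE t.2.2))

section Aux
variable {K : Type*} [Field K] {Λ : Type*} [Ring Λ] [Algebra K Λ] [FiniteDimensional K Λ]
  {M : Type*} [AddCommGroup M] [Module Λᵐᵒᵖ M] [Module K M]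
  [SMulCommClass Λᵐᵒᵖ K M] [IsScalarTower K Λᵐᵒᵖ M] [FiniteDimensional K M]

/-- Inclusion of `Λ` into the triple. -/
def incl1 : Λ →ₗ[K] Λ × (M →ₗ[K] K) × Module.End Λᵐᵒᵖ M where
  toFun a := (a, 0, 0)
  map_add' a b := by ext <;> simp
  map_smul' c a := by ext <;> simp

/-- Inclusion of `DM` into the triple. -/
def incl2 : (M →ₗ[K] K) →ₗ[K] Λ × (M →ₗ[K] K) × Module.End Λᵐᵒᵖ M where
  toFun f := (0, f, 0)
  map_add' a b := by ext <;> simp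
  map_smul' c a := by ext <;> simp

/-- Inclusion of `E` into the triple. -/
def incl3 : Module.End Λᵐᵒᵖ M →ₗ[K] Λ × (M →ₗ[K] K) × Module.End Λᵐᵒᵖ M where
  toFun b := (0, 0, b)
  map_add' a b := by ext <;> simp
  map_smul' c a := by ext <;> simp

lemma triple_decomp (ξ : (Λ × (M →ₗ[K] K) × Module.End Λᵐᵒᵖ M) →ₗ[K] K)
    (z : Λ × (M →ₗ[K] K) × Module.End Λᵐᵒᵖ M) :
    ξ z = ξ (incl1 z.1) + ξ (incl2 z.2.1) + ξ (incl3 z.2.2) := by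
  rw [← map_add, ← map_add]
  congr 1
  ext <;> simp [incl1, incl2, incl3]

lemma opSmulK_zero : opSmulK (0 : Λ) = (0 : M →ₗ[K] M) := by
  refine LinearMap.ext fun m => ?_
  show op (0 : Λ) • m = 0
  simp

lemma eToK_zero : eToK (0 : Module.End Λᵐᵒᵖ M) = (0 : M →ₗ[K] M) := by
  refine LinearMap.ext fun m => ?_
  rfl
end Aux

/-- if `Hom_Λ(M,Λ) = 0` and `△ = (Λ DM; 0 E)` with `E = End_Λ(M)`,
then the `K`-dual `D△` is isomorphic, as a `△`-`△`-bimodule, to the matrix bimodule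
`(DΛ 0; M DE)` (where the bimodule actions use the pairings `dpair` and `epair`).
The bimodule structure on `D△` is `(t₁·ξ·t₂)(z) = ξ(t₂ z t₁)`. -/
theorem dual_of_triangular_is_matrix_bimodule
    (hM : ∀ f : M →ₗ[Λᵐᵒᵖ] Λ, f = 0) :
    ∃ Ψ : ((Λ × (M →ₗ[K] K) × Module.End Λᵐᵒᵖ M) →ₗ[K] K) →
        ((Λ →ₗ[K] K) × M × (Module.End Λᵐᵒᵖ M →ₗ[K] K)),
      Function.Bijective Ψ ∧
      (∀ ξ η, Ψ (ξ + η) = Ψ ξ + Ψ η) ∧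
      (∀ (c : K) ξ, Ψ (c • ξ) = c • Ψ ξ) ∧
      -- compatibility with the left `△`-actions: `Ψ(t·ξ) = t·(Ψ ξ)`,
      -- where `(t·ξ)(z) = ξ(z t)`
      (∀ (t : Λ × (M →ₗ[K] K) × Module.End Λᵐᵒᵖ M) (ξ η),
        (∀ z, η z = ξ (dTriMul z t)) → Ψ η = dTriLact t (Ψ ξ)) ∧
      -- compatibility with the right `△`-actions: `Ψ(ξ·t) = (Ψ ξ)·t`,
      -- where `(ξ·t)(z) = ξ(t z)`
      (∀ (t : Λ × (M →ₗ[K] K) × Module.End Λᵐᵒᵖ M) (ξ η),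
        (∀ z, η z = ξ (dTriMul t z)) → Ψ η = dTriRact (Ψ ξ) t) := by
  classical
  set e := Module.evalEquiv K M with he
  refine ⟨fun ξ => (ξ.comp incl1, e.symm (ξ.comp incl2), ξ.comp incl3), ?_, ?_, ?_, ?_, ?_⟩
  · constructor
    · intro ξ η h
      have h1 : ξ.comp incl1 = η.comp incl1 := congrArg Prod.fst h
      have h2 : e.symm (ξ.comp incl2) = e.symm (η.comp incl2) :=
        congrArg (fun w => w.2.1) h
      have h3 : ξ.comp incl3 = η.comp incl3 := congrArg (fun w => w.2.2) h
      have h2' : ξ.comp incl2 = η.comp incl2 := e.symm.injective h2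
      refine LinearMap.ext fun z => ?_
      rw [triple_decomp ξ z, triple_decomp η z,
        show ξ (incl1 z.1) = η (incl1 z.1) from LinearMap.congr_fun h1 z.1,
        show ξ (incl2 z.2.1) = η (incl2 z.2.1) from LinearMap.congr_fun h2' z.2.1,
        show ξ (incl3 z.2.2) = η (incl3 z.2.2) from LinearMap.congr_fun h3 z.2.2]
    · rintro ⟨g, m, h⟩
      refine ⟨{ toFun := fun z => g z.1 + z.2.1 m + h z.2.2,
                map_add' := fun z w => by
                  simp only [Prod.fst_add, Prod.snd_add, map_add, LinearMap.add_apply]; ring,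
                map_smul' := fun c z => by
                  simp only [Prod.smul_fst, Prod.smul_snd, map_smul, LinearMap.smul_apply,
                    RingHom.id_apply, smul_eq_mul]; ring }, ?_⟩
      refine Prod.ext ?_ (Prod.ext ?_ ?_)
      · ext a; simp [incl1]
      · show e.symm _ = m
        rw [LinearEquiv.symm_apply_eq]
        refine LinearMap.ext fun f => ?_
        show g 0 + f m + h 0 = e m f
        rw [he, Module.evalEquiv_apply, Module.Dual.eval_apply, map_zero, map_zero,
          zero_add, add_zero]
      · ext b; simp [incl3]
  · intro ξ η; refine Prod.ext ?_ (Prod.ext ?_ ?_) <;> simp [LinearMap.add_comp]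
  · intro c ξ; refine Prod.ext ?_ (Prod.ext ?_ ?_) <;> simp [LinearMap.smul_comp]
  · intro t ξ η hη
    have hm : ∀ g : M →ₗ[K] K, g (e.symm (ξ.comp incl2)) = ξ (incl2 g) := fun g => by
      rw [he, Module.apply_evalEquiv_symm_apply]; rfl
    refine Prod.ext ?_ (Prod.ext ?_ ?_)
    · ext a
      show η (incl1 a) = ξ (incl1 (a * t.1)) + dpair t.2.1 (e.symm (ξ.comp incl2)) a
      rw [hη, show dpair t.2.1 (e.symm (ξ.comp incl2)) a
            = (t.2.1.comp (opSmulK a)) (e.symm (ξ.comp incl2)) from rfl, hm]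
      rw [triple_decomp ξ (dTriMul (incl1 a) t)]
      have : dTriMul (incl1 a) t = (a * t.1, t.2.1.comp (opSmulK a), 0) := by
        simp [dTriMul, incl1]
      rw [this]
      simp [incl1, incl2, incl3]
      exact map_zero ξ
    · show e.symm (η.comp incl2) = t.2.2 (e.symm (ξ.comp incl2))
      rw [LinearEquiv.symm_apply_eq]
      ext f
      show η (incl2 f) = f (t.2.2 (e.symm (ξ.comp incl2)))
      rw [hη, show f (t.2.2 (e.symm (ξ.comp incl2)))
            = (f.comp (eToK t.2.2)) (e.symm (ξ.comp incl2)) from rfl, hm]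
      congr 1
      have : dTriMul (incl2 f) t = (0, f.comp (eToK t.2.2), 0) := by
        simp [dTriMul, incl2, opSmulK_zero]
      rw [this]; rfl
    · ext b
      show η (incl3 b) = ξ (incl3 (b * t.2.2))
      rw [hη]
      congr 1
      have : dTriMul (incl3 b) t = (0, 0, b * t.2.2) := by
        simp [dTriMul, incl3, opSmulK_zero]
      rw [this]; rfl
  · intro t ξ η hη
    have hm : ∀ g : M →ₗ[K] K, g (e.symm (ξ.comp incl2)) = ξ (incl2 g) := fun g => by
      rw [he, Module.apply_evalEquiv_symm_apply]; rfl
    refine Prod.ext ?_ (Prod.ext ?_ ?_)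
    · ext a
      show η (incl1 a) = ξ (incl1 (t.1 * a))
      rw [hη]
      congr 1
      have : dTriMul t (incl1 a) = (t.1 * a, 0, 0) := by
        simp [dTriMul, incl1, eToK_zero]
      rw [this]; rfl
    · show e.symm (η.comp incl2) = op t.1 • e.symm (ξ.comp incl2)
      rw [LinearEquiv.symm_apply_eq]
      ext f
      show η (incl2 f) = f (op t.1 • e.symm (ξ.comp incl2))
      rw [hη, show f (op t.1 • e.symm (ξ.comp incl2))
            = (f.comp (opSmulK t.1)) (e.symm (ξ.comp incl2)) from rfl, hm]
      congr 1
      have : dTriMul t (incl2 f) = (0, f.comp (opSmulK t.1), 0) := by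
        simp [dTriMul, incl2, eToK_zero]
      rw [this]; rfl
    · ext b
      show η (incl3 b)
        = epair (e.symm (ξ.comp incl2)) t.2.1 b + ξ (incl3 (t.2.2 * b))
      rw [hη]
      have hd : dTriMul t (incl3 b) = (0, t.2.1.comp (eToK b), t.2.2 * b) := by
        simp [dTriMul, incl3]
      rw [hd, triple_decomp ξ (0, t.2.1.comp (eToK b), t.2.2 * b)]
      show ξ (incl1 (0:Λ)) + ξ (incl2 (t.2.1.comp (eToK b))) + ξ (incl3 (t.2.2*b))
        = t.2.1 (b (e.symm (ξ.comp incl2))) + ξ (incl3 (t.2.2 * b))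
      rw [show t.2.1 (b (e.symm (ξ.comp incl2)))
            = (t.2.1.comp (eToK b)) (e.symm (ξ.comp incl2)) from rfl, hm]
      simp
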